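/- arXiv:2309.01254 — 2 statements merged into one kernel-verified Lean document; each statement's English description precedes it below -/
import Mathlib

section
/- For every exponent p with 1 ≤ p < ∞, the integral over φ ∈ [0, π/4] of (cos φ)^p − (sin φ)^p is at least π/8 when 1 ≤ p ≤ 2. -/
open Real

theorem stmt_1 (p : ℝ) (hp1 : 1 ≤ p) (hp2 : p ≤ 2) :
    π / 8 ≤ ∫ φ in (0:ℝ)..(π/4), (Real.cos φ ^ p - Real.sin φ ^ p) := by
  have hπ : (0:ℝ) < π := Real.pi_pos
  have hπ4 : (0:ℝ) < π / 4 := by positivity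
  have hp0 : (0:ℝ) < p := by linarith
  set f : ℝ → ℝ := fun φ => Real.cos φ ^ p - Real.sin φ ^ p with hf
  -- continuity on [0, π/4]
  have hcont : ContinuousOn f (Set.Icc 0 (π/4)) := by
    intro x hx
    obtain ⟨hx0, hx1⟩ := hx
    have hcosx : 0 < Real.cos x := by
      apply Real.cos_pos_of_mem_Ioo
      constructor <;> nlinarith [Real.pi_pos]
    have h1 : ContinuousAt (fun φ => Real.cos φ ^ p) x := by
      exact (Real.continuousAt_rpow_const _ _ (Or.inl hcosx.ne')).comp
        Real.continuous_cos.continuousAt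
    have h2 : ContinuousAt (fun φ => Real.sin φ ^ p) x := by
      exact (Real.continuousAt_rpow_const _ _ (Or.inr hp0.le)).comp
        Real.continuous_sin.continuousAt
    exact (h1.sub h2).continuousWithinAt
  -- concavity
  have hconc : ConcaveOn ℝ (Set.Icc 0 (π/4)) f := by
    apply concaveOn_of_hasDerivWithinAt2_nonpos (convex_Icc _ _) hcont
      (f' := fun φ => -(p * Real.cos φ ^ (p-1)) * Real.sin φ
        - (p * Real.sin φ ^ (p-1)) * Real.cos φ)
      (f'' := fun φ => (p * ((p-1) * Real.cos φ ^ (p-2)) * Real.sin φ * Real.sin φ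
          - p * Real.cos φ ^ (p-1) * Real.cos φ)
        - ((p * ((p-1) * Real.sin φ ^ (p-2)) * Real.cos φ * Real.cos φ)
          + p * Real.sin φ ^ (p-1) * (-Real.sin φ)))
    · rw [interior_Icc]
      intro x hx
      obtain ⟨hx0, hx1⟩ := hx
      have hsin : 0 < Real.sin x := Real.sin_pos_of_pos_of_lt_pi hx0 (by nlinarith)
      have hcos : 0 < Real.cos x := Real.cos_pos_of_mem_Ioo ⟨by nlinarith, by nlinarith⟩
      have h1 : HasDerivAt (fun φ => Real.cos φ ^ p)
          (p * Real.cos x ^ (p-1) * (-Real.sin x)) x :=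
        (Real.hasDerivAt_rpow_const (Or.inl hcos.ne')).comp x (Real.hasDerivAt_cos x)
      have h2 : HasDerivAt (fun φ => Real.sin φ ^ p)
          (p * Real.sin x ^ (p-1) * Real.cos x) x :=
        (Real.hasDerivAt_rpow_const (Or.inl hsin.ne')).comp x (Real.hasDerivAt_sin x)
      have := (h1.sub h2)
      have heq : p * Real.cos x ^ (p-1) * (-Real.sin x) - p * Real.sin x ^ (p-1) * Real.cos x
          = -(p * Real.cos x ^ (p-1)) * Real.sin x - (p * Real.sin x ^ (p-1)) * Real.cos x := by
        ring
      rw [heq] at this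
      exact this.hasDerivWithinAt
    · rw [interior_Icc]
      intro x hx
      obtain ⟨hx0, hx1⟩ := hx
      have hsin : 0 < Real.sin x := Real.sin_pos_of_pos_of_lt_pi hx0 (by nlinarith)
      have hcos : 0 < Real.cos x := Real.cos_pos_of_mem_Ioo ⟨by nlinarith, by nlinarith⟩
      have h1 : HasDerivAt (fun φ => Real.cos φ ^ (p-1))
          ((p-1) * Real.cos x ^ (p-1-1) * (-Real.sin x)) x :=
        (Real.hasDerivAt_rpow_const (Or.inl hcos.ne')).comp x (Real.hasDerivAt_cos x)
      have h2 : HasDerivAt (fun φ => Real.sin φ ^ (p-1))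
          ((p-1) * Real.sin x ^ (p-1-1) * Real.cos x) x :=
        (Real.hasDerivAt_rpow_const (Or.inl hsin.ne')).comp x (Real.hasDerivAt_sin x)
      have hA : HasDerivAt (fun φ => -(p * Real.cos φ ^ (p-1)) * Real.sin φ)
          ((-(p * ((p-1) * Real.cos x ^ (p-1-1) * (-Real.sin x)))) * Real.sin x
            + (-(p * Real.cos x ^ (p-1))) * Real.cos x) x := by
        exact (((h1.const_mul p).neg).mul (Real.hasDerivAt_sin x))
      have hB : HasDerivAt (fun φ => (p * Real.sin φ ^ (p-1)) * Real.cos φ)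
          ((p * ((p-1) * Real.sin x ^ (p-1-1) * Real.cos x)) * Real.cos x
            + (p * Real.sin x ^ (p-1)) * (-Real.sin x)) x := by
        exact ((h2.const_mul p).mul (Real.hasDerivAt_cos x))
      have := hA.sub hB
      have heq : p - 1 - 1 = p - 2 := by ring
      rw [heq] at this
      have heq2 : (-(p * ((p-1) * Real.cos x ^ (p-2) * (-Real.sin x)))) * Real.sin x
            + (-(p * Real.cos x ^ (p-1))) * Real.cos x
          - ((p * ((p-1) * Real.sin x ^ (p-2) * Real.cos x)) * Real.cos x
            + (p * Real.sin x ^ (p-1)) * (-Real.sin x))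
          = (p * ((p-1) * Real.cos x ^ (p-2)) * Real.sin x * Real.sin x
          - p * Real.cos x ^ (p-1) * Real.cos x)
        - ((p * ((p-1) * Real.sin x ^ (p-2)) * Real.cos x * Real.cos x)
          + p * Real.sin x ^ (p-1) * (-Real.sin x)) := by ring
      rw [heq2] at this
      exact this.hasDerivWithinAt
    · rw [interior_Icc]
      intro x hx
      obtain ⟨hx0, hx1⟩ := hx
      have hsin : 0 < Real.sin x := Real.sin_pos_of_pos_of_lt_pi hx0 (by nlinarith)
      have hcos : 0 < Real.cos x := Real.cos_pos_of_mem_Ioo ⟨by nlinarith, by nlinarith⟩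
      have hsc : Real.sin x ≤ Real.cos x := by
        rw [← Real.cos_pi_div_two_sub]
        apply Real.cos_le_cos_of_nonneg_of_le_pi
        · nlinarith
        · nlinarith
        · nlinarith
      -- cos^(p-2) ≤ sin^(p-2)
      have hkey1 : Real.cos x ^ (p-2) ≤ Real.sin x ^ (p-2) :=
        Real.rpow_le_rpow_of_nonpos hsin hsc (by linarith)
      -- sin^(p-1) ≤ cos^(p-1)
      have hkey2 : Real.sin x ^ (p-1) ≤ Real.cos x ^ (p-1) :=
        Real.rpow_le_rpow hsin.le hsc (by linarith)
      have hpos1 : (0:ℝ) ≤ Real.cos x ^ (p-2) := (Real.rpow_pos_of_pos hcos _).le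
      have hpos2 : (0:ℝ) ≤ Real.sin x ^ (p-2) := (Real.rpow_pos_of_pos hsin _).le
      have hpos3 : (0:ℝ) ≤ Real.sin x ^ (p-1) := (Real.rpow_pos_of_pos hsin _).le
      have hpos4 : (0:ℝ) ≤ Real.cos x ^ (p-1) := (Real.rpow_pos_of_pos hcos _).le
      have hp1' : (0:ℝ) ≤ p - 1 := by linarith
      -- term1 : p(p-1)cos^(p-2) sin² ≤ p(p-1) sin^(p-2) cos²
      have ht1 : p * ((p-1) * Real.cos x ^ (p-2)) * Real.sin x * Real.sin x
          ≤ p * ((p-1) * Real.sin x ^ (p-2)) * Real.cos x * Real.cos x := by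
        have h1 : Real.sin x * Real.sin x ≤ Real.cos x * Real.cos x := by nlinarith
        have h2 : (p-1) * Real.cos x ^ (p-2) ≤ (p-1) * Real.sin x ^ (p-2) :=
          mul_le_mul_of_nonneg_left hkey1 hp1'
        calc p * ((p-1) * Real.cos x ^ (p-2)) * Real.sin x * Real.sin x
            ≤ p * ((p-1) * Real.sin x ^ (p-2)) * (Real.sin x * Real.sin x) := by
              rw [mul_assoc]
              apply mul_le_mul_of_nonneg_right _ (by nlinarith)
              exact mul_le_mul_of_nonneg_left h2 hp0.le
          _ ≤ p * ((p-1) * Real.sin x ^ (p-2)) * (Real.cos x * Real.cos x) := by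
              apply mul_le_mul_of_nonneg_left h1
              positivity
          _ = p * ((p-1) * Real.sin x ^ (p-2)) * Real.cos x * Real.cos x := by ring
      -- term2 : p sin^(p-1) sin ≤ p cos^(p-1) cos
      have ht2 : p * Real.sin x ^ (p-1) * Real.sin x ≤ p * Real.cos x ^ (p-1) * Real.cos x := by
        apply mul_le_mul
        · exact mul_le_mul_of_nonneg_left hkey2 hp0.le
        · exact hsc
        · exact hsin.le
        · positivity
      nlinarith [ht1, ht2]
  -- pointwise chord bound
  have hchord : ∀ φ ∈ Set.Icc (0:ℝ) (π/4), 1 - 4/π * φ ≤ f φ := by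
    intro φ hφ
    obtain ⟨hφ0, hφ1⟩ := hφ
    have hb0 : 0 ≤ 4/π * φ := by positivity
    have hb1 : 4/π * φ ≤ 1 := by
      rw [div_mul_eq_mul_div, div_le_one hπ]
      linarith
    have h0 : (0:ℝ) ∈ Set.Icc (0:ℝ) (π/4) := ⟨le_rfl, hπ4.le⟩
    have h1 : (π/4) ∈ Set.Icc (0:ℝ) (π/4) := ⟨hπ4.le, le_rfl⟩
    have := hconc.2 h0 h1 (show (0:ℝ) ≤ 1 - 4/π * φ by linarith) hb0
      (show (1 - 4/π * φ) + 4/π * φ = 1 by ring)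
    have heq : (1 - 4/π * φ) • (0:ℝ) + (4/π * φ) • (π/4) = φ := by
      have hπ' : π ≠ 0 := hπ.ne'
      field_simp
      simp only [smul_eq_mul, mul_zero, zero_add]
      field_simp
    rw [heq] at this
    have hf0 : f 0 = 1 := by
      simp only [hf, Real.cos_zero, Real.sin_zero, Real.one_rpow,
        Real.zero_rpow hp0.ne', sub_zero]
    have hf1 : f (π/4) = 0 := by
      simp only [hf, Real.cos_pi_div_four, Real.sin_pi_div_four, sub_self]
    rw [hf0, hf1] at this
    simpa using this
  -- integrability
  have hint : IntervalIntegrable f MeasureTheory.volume 0 (π/4) := by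
    apply ContinuousOn.intervalIntegrable
    rwa [Set.uIcc_of_le hπ4.le]
  have hint2 : IntervalIntegrable (fun φ => 1 - 4/π * φ) MeasureTheory.volume 0 (π/4) := by
    apply Continuous.intervalIntegrable
    continuity
  -- compute the integral of the chord
  have hcomp : ∫ φ in (0:ℝ)..(π/4), (1 - 4/π * φ) = π / 8 := by
    rw [intervalIntegral.integral_sub intervalIntegrable_const (by
      apply Continuous.intervalIntegrable; continuity),
      intervalIntegral.integral_const_mul, integral_id, intervalIntegral.integral_const]
    simp
    field_simp
    ring
  calc π / 8 = ∫ φ in (0:ℝ)..(π/4), (1 - 4/π * φ) := hcomp.symm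
    _ ≤ ∫ φ in (0:ℝ)..(π/4), f φ := by
        apply intervalIntegral.integral_mono_on hπ4.le hint2 hint
        exact hchord
    _ = _ := rfl
end

section
/- Let Z, Z' be independent standard normal random variables and p ∈ [1, 2]. Then E[| |Z|^p − |Z'|^p |] ≥ (2^{p/2}/2)·Γ(p/2 + 1). -/
open MeasureTheory ProbabilityTheory Real Set

namespace Stmt19

noncomputable def Af (p θ : ℝ) : ℝ := |(|Real.cos θ|) ^ p - (|Real.sin θ|) ^ p|

lemma Af_cont {p : ℝ} (hp : 0 < p) : Continuous (Af p) := by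
  apply Continuous.abs
  exact ((continuous_abs.comp Real.continuous_cos).rpow_const (fun x => Or.inr hp.le)).sub
    ((continuous_abs.comp Real.continuous_sin).rpow_const (fun x => Or.inr hp.le))

lemma Af_periodic (p : ℝ) : Function.Periodic (Af p) (π/2) := by
  intro x
  simp only [Af, Real.cos_add_pi_div_two, Real.sin_add_pi_div_two, abs_neg]
  rw [abs_sub_comm]

lemma Af_symm (p x : ℝ) : Af p (π/2 - x) = Af p x := by
  simp only [Af, Real.cos_pi_div_two_sub, Real.sin_pi_div_two_sub]
  rw [abs_sub_comm]

lemma sin_le_cos {θ : ℝ} (h0 : 0 ≤ θ) (h1 : θ ≤ π/4) : Real.sin θ ≤ Real.cos θ := by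
  rw [← Real.sin_pi_div_two_sub]
  have hpi := Real.pi_pos
  apply Real.strictMonoOn_sin.monotoneOn ⟨by linarith, by linarith⟩
    ⟨by linarith, by linarith⟩ (by linarith)

lemma Af_eq {p θ : ℝ} (hp : 0 < p) (h0 : 0 ≤ θ) (h1 : θ ≤ π/4) :
    Af p θ = Real.cos θ ^ p - Real.sin θ ^ p := by
  have hpi := Real.pi_pos
  have hc : 0 ≤ Real.cos θ := Real.cos_nonneg_of_mem_Icc ⟨by linarith, by linarith⟩
  have hs : 0 ≤ Real.sin θ := Real.sin_nonneg_of_nonneg_of_le_pi h0 (by linarith)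
  rw [Af, abs_of_nonneg hc, abs_of_nonneg hs, abs_of_nonneg]
  exact sub_nonneg.2 (Real.rpow_le_rpow hs (sin_le_cos h0 h1) hp.le)

lemma key_ineqs {p x : ℝ} (hp1 : 1 ≤ p) (hp2 : p ≤ 2) (hs : 0 < Real.sin x)
    (hsc : Real.sin x ≤ Real.cos x) :
    Real.sin x ^ (p-1) * Real.sin x ≤ Real.cos x ^ (p-1) * Real.cos x ∧
    Real.cos x ^ (p-1-1) * (Real.sin x * Real.sin x) ≤
      Real.sin x ^ (p-1-1) * (Real.cos x * Real.cos x) := by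
  have hc : 0 < Real.cos x := lt_of_lt_of_le hs hsc
  constructor
  · rw [← Real.rpow_add_one hs.ne', ← Real.rpow_add_one hc.ne']
    exact Real.rpow_le_rpow hs.le hsc (by linarith)
  · have e1 : Real.sin x * Real.sin x = Real.sin x ^ (p-1-1) * Real.sin x ^ (4-p) := by
      rw [← Real.rpow_add hs]
      rw [show p-1-1 + (4-p) = ((2:ℕ):ℝ) by push_cast; ring, Real.rpow_natCast, sq]
    have e2 : Real.cos x * Real.cos x = Real.cos x ^ (p-1-1) * Real.cos x ^ (4-p) := by
      rw [← Real.rpow_add hc]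
      rw [show p-1-1 + (4-p) = ((2:ℕ):ℝ) by push_cast; ring, Real.rpow_natCast, sq]
    rw [e1, e2]
    calc Real.cos x ^ (p-1-1) * (Real.sin x ^ (p-1-1) * Real.sin x ^ (4-p))
        = (Real.cos x ^ (p-1-1) * Real.sin x ^ (p-1-1)) * Real.sin x ^ (4-p) := by ring
      _ ≤ (Real.cos x ^ (p-1-1) * Real.sin x ^ (p-1-1)) * Real.cos x ^ (4-p) := by
          apply mul_le_mul_of_nonneg_left (Real.rpow_le_rpow hs.le hsc (by linarith))
          positivity
      _ = Real.sin x ^ (p-1-1) * (Real.cos x ^ (p-1-1) * Real.cos x ^ (4-p)) := by ring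

lemma g_concave {p : ℝ} (hp1 : 1 ≤ p) (hp2 : p ≤ 2) :
    ConcaveOn ℝ (Icc 0 (π/4)) (fun θ => Real.cos θ ^ p - Real.sin θ ^ p) := by
  have hpi := Real.pi_pos
  have h4 : (0:ℝ) < π/4 := by linarith
  have hint : interior (Icc (0:ℝ) (π/4)) = Ioo 0 (π/4) := interior_Icc
  apply concaveOn_of_hasDerivWithinAt2_nonpos (f' := fun θ =>
      -Real.sin θ * p * Real.cos θ ^ (p-1) - Real.cos θ * p * Real.sin θ ^ (p-1))
    (f'' := fun θ =>
      (-Real.cos θ * p * Real.cos θ ^ (p-1) +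
        -Real.sin θ * p * (-Real.sin θ * (p-1) * Real.cos θ ^ (p-1-1))) -
      (-Real.sin θ * p * Real.sin θ ^ (p-1) +
        Real.cos θ * p * (Real.cos θ * (p-1) * Real.sin θ ^ (p-1-1))))
    (convex_Icc _ _)
  · have hp : (0:ℝ) < p := by linarith
    exact (((Real.continuous_cos.rpow_const (fun x => Or.inr hp.le)).sub
      (Real.continuous_sin.rpow_const (fun x => Or.inr hp.le))).continuousOn)
  · intro x hx
    rw [hint] at hx
    obtain ⟨hx0, hx1⟩ := hx
    have hs : 0 < Real.sin x := Real.sin_pos_of_pos_of_lt_pi hx0 (by linarith)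
    have hc : 0 < Real.cos x := Real.cos_pos_of_mem_Ioo ⟨by linarith, by linarith⟩
    exact (((Real.hasDerivAt_cos x).rpow_const (Or.inl hc.ne')).sub
      ((Real.hasDerivAt_sin x).rpow_const (Or.inl hs.ne'))).hasDerivWithinAt
  · intro x hx
    rw [hint] at hx
    obtain ⟨hx0, hx1⟩ := hx
    have hs : 0 < Real.sin x := Real.sin_pos_of_pos_of_lt_pi hx0 (by linarith)
    have hc : 0 < Real.cos x := Real.cos_pos_of_mem_Ioo ⟨by linarith, by linarith⟩
    have h1 : HasDerivAt (fun θ => -Real.sin θ * p * Real.cos θ ^ (p-1))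
        (-Real.cos x * p * Real.cos x ^ (p-1) +
          -Real.sin x * p * (-Real.sin x * (p-1) * Real.cos x ^ (p-1-1))) x :=
      (((Real.hasDerivAt_sin x).neg.mul_const p).mul
        ((Real.hasDerivAt_cos x).rpow_const (Or.inl hc.ne')))
    have h2 : HasDerivAt (fun θ => Real.cos θ * p * Real.sin θ ^ (p-1))
        (-Real.sin x * p * Real.sin x ^ (p-1) +
          Real.cos x * p * (Real.cos x * (p-1) * Real.sin x ^ (p-1-1))) x :=
      (((Real.hasDerivAt_cos x).mul_const p).mul
        ((Real.hasDerivAt_sin x).rpow_const (Or.inl hs.ne')))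
    exact (h1.sub h2).hasDerivWithinAt
  · intro x hx
    rw [hint] at hx
    obtain ⟨hx0, hx1⟩ := hx
    have hs : 0 < Real.sin x := Real.sin_pos_of_pos_of_lt_pi hx0 (by linarith)
    have hsc : Real.sin x ≤ Real.cos x := by
      rw [← Real.sin_pi_div_two_sub]
      exact Real.strictMonoOn_sin.monotoneOn ⟨by linarith, by linarith⟩
        ⟨by linarith, by linarith⟩ (by linarith)
    obtain ⟨k1, k2⟩ := key_ineqs hp1 hp2 hs hsc
    have t1 : 0 ≤ p * (p-1) *
        (Real.sin x ^ (p-1-1) * (Real.cos x * Real.cos x) -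
          Real.cos x ^ (p-1-1) * (Real.sin x * Real.sin x)) := by
      apply mul_nonneg (by nlinarith) (sub_nonneg.2 k2)
    have t2 : 0 ≤ p * (Real.cos x ^ (p-1) * Real.cos x - Real.sin x ^ (p-1) * Real.sin x) :=
      mul_nonneg (by linarith) (sub_nonneg.2 k1)
    nlinarith [t1, t2]

lemma chord {p θ : ℝ} (hp1 : 1 ≤ p) (hp2 : p ≤ 2) (h0 : 0 ≤ θ) (h1 : θ ≤ π/4) :
    1 - 4/π * θ ≤ Real.cos θ ^ p - Real.sin θ ^ p := by
  have hpi := Real.pi_pos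
  have hg := g_concave hp1 hp2
  have hmem0 : (0:ℝ) ∈ Icc (0:ℝ) (π/4) := ⟨le_refl _, by linarith⟩
  have hmem1 : π/4 ∈ Icc (0:ℝ) (π/4) := ⟨by linarith, le_refl _⟩
  have ha : 0 ≤ 1 - 4/π * θ := by
    rw [sub_nonneg]
    rw [div_mul_eq_mul_div, div_le_one hpi]
    linarith
  have hb : 0 ≤ 4/π * θ := by positivity
  have hab : (1 - 4/π * θ) + 4/π * θ = 1 := by ring
  have := hg.2 hmem0 hmem1 ha hb hab
  simp only [smul_eq_mul, mul_zero, zero_add] at this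
  have harg : 4/π * θ * (π/4) = θ := by field_simp
  rw [harg] at this
  have hg0 : Real.cos (0:ℝ) ^ p - Real.sin (0:ℝ) ^ p = 1 := by
    simp [Real.zero_rpow (by linarith : p ≠ 0), Real.one_rpow]
  have hg1 : Real.cos (π/4) ^ p - Real.sin (π/4) ^ p = 0 := by
    rw [Real.cos_pi_div_four, Real.sin_pi_div_four, sub_self]
  rw [hg0, hg1] at this
  calc 1 - 4/π * θ = (1 - 4/π * θ) * 1 + 4/π * θ * 0 := by ring
    _ ≤ _ := this

lemma angular {p : ℝ} (hp1 : 1 ≤ p) (hp2 : p ≤ 2) :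
    π ≤ ∫ θ in Ioo (-π) π, Af p θ := by
  have hpi := Real.pi_pos
  have hp : (0:ℝ) < p := by linarith
  have hc := Af_cont hp
  have hii : ∀ a b : ℝ, IntervalIntegrable (Af p) volume a b :=
    fun a b => hc.intervalIntegrable a b
  have key : ∀ t : ℝ, ∫ x in t..(t + π/2), Af p x = ∫ x in (0:ℝ)..(π/2), Af p x := by
    intro t
    simpa using (Af_periodic p).intervalIntegral_add_eq t 0
  have hIoo : ∫ θ in Ioo (-π) π, Af p θ = ∫ θ in (-π)..π, Af p θ := by
    rw [intervalIntegral.integral_of_le (by linarith), integral_Ioc_eq_integral_Ioo]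
  have split : ∫ x in (-π)..π, Af p x = 4 * ∫ x in (0:ℝ)..(π/2), Af p x := by
    have e1 : ∫ x in (-π)..(-π + π/2), Af p x = ∫ x in (0:ℝ)..(π/2), Af p x := key (-π)
    have e2 : ∫ x in (-π + π/2)..(0:ℝ), Af p x = ∫ x in (0:ℝ)..(π/2), Af p x := by
      have h := key (-π + π/2)
      rw [show (-π + π/2 + π/2 : ℝ) = 0 by ring] at h
      exact h
    have e4 : ∫ x in (π/2)..π, Af p x = ∫ x in (0:ℝ)..(π/2), Af p x := by
      have h := key (π/2)
      rw [show (π/2 + π/2 : ℝ) = π by ring] at h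
      exact h
    have a1 : ∫ x in (-π)..(0:ℝ), Af p x =
        (∫ x in (-π)..(-π + π/2), Af p x) + ∫ x in (-π + π/2)..(0:ℝ), Af p x :=
      (intervalIntegral.integral_add_adjacent_intervals (hii _ _) (hii _ _)).symm
    have a2 : ∫ x in (0:ℝ)..π, Af p x =
        (∫ x in (0:ℝ)..(π/2), Af p x) + ∫ x in (π/2)..π, Af p x :=
      (intervalIntegral.integral_add_adjacent_intervals (hii _ _) (hii _ _)).symm
    have a0 : ∫ x in (-π)..π, Af p x =
        (∫ x in (-π)..(0:ℝ), Af p x) + ∫ x in (0:ℝ)..π, Af p x :=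
      (intervalIntegral.integral_add_adjacent_intervals (hii _ _) (hii _ _)).symm
    rw [a0, a1, a2, e1, e2, e4]; ring
  have half : ∫ x in (0:ℝ)..(π/2), Af p x = 2 * ∫ x in (0:ℝ)..(π/4), Af p x := by
    have hrefl : ∫ x in (π/4)..(π/2), Af p x = ∫ x in (0:ℝ)..(π/4), Af p x := by
      have := intervalIntegral.integral_comp_sub_left (a := (0:ℝ)) (b := π/4)
        (fun x => Af p x) (π/2)
      simp only [Af_symm] at this
      rw [show (π/2 - π/4 : ℝ) = π/4 by ring, show (π/2 - (0:ℝ)) = π/2 by ring] at this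
      exact this.symm
    have a3 : ∫ x in (0:ℝ)..(π/2), Af p x =
        (∫ x in (0:ℝ)..(π/4), Af p x) + ∫ x in (π/4)..(π/2), Af p x :=
      (intervalIntegral.integral_add_adjacent_intervals (hii _ _) (hii _ _)).symm
    rw [a3, hrefl]; ring
  have quarter : π/8 ≤ ∫ x in (0:ℝ)..(π/4), Af p x := by
    have hcongr : ∫ x in (0:ℝ)..(π/4), Af p x =
        ∫ x in (0:ℝ)..(π/4), (Real.cos x ^ p - Real.sin x ^ p) := by
      apply intervalIntegral.integral_congr
      intro x hx
      rw [uIcc_of_le (by linarith : (0:ℝ) ≤ π/4)] at hx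
      exact Af_eq hp hx.1 hx.2
    have hmono : ∫ x in (0:ℝ)..(π/4), (1 - 4/π * x) ≤
        ∫ x in (0:ℝ)..(π/4), (Real.cos x ^ p - Real.sin x ^ p) := by
      apply intervalIntegral.integral_mono_on (by linarith)
      · exact (continuous_const.sub (continuous_const.mul continuous_id)).intervalIntegrable _ _
      · exact ((Real.continuous_cos.rpow_const (fun x => Or.inr hp.le)).sub
          (Real.continuous_sin.rpow_const (fun x => Or.inr hp.le))).intervalIntegrable _ _
      · intro x hx
        exact chord hp1 hp2 hx.1 hx.2
    have hval : ∫ x in (0:ℝ)..(π/4), (1 - 4/π * x) = π/8 := by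
      rw [intervalIntegral.integral_sub (g := fun x => 4/π * x) (intervalIntegrable_const)
        ((continuous_const.mul continuous_id').intervalIntegrable _ _)]
      rw [intervalIntegral.integral_const_mul, intervalIntegral.integral_const,
        integral_id]
      field_simp
      ring
    rw [hcongr]
    calc π/8 = ∫ x in (0:ℝ)..(π/4), (1 - 4/π * x) := hval.symm
      _ ≤ _ := hmono
  rw [hIoo, split, half]
  linarith

lemma radial {p : ℝ} (hp1 : 1 ≤ p) :
    ∫ r in Ioi (0:ℝ), r ^ (p+1) * Real.exp (-(1/2) * r ^ (2:ℝ)) =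
      2 ^ (p/2) * Real.Gamma (p/2 + 1) := by
  rw [show (fun r : ℝ => r ^ (p+1) * Real.exp (-(1/2) * r ^ (2:ℝ)))
      = fun r : ℝ => r ^ (p+1) * Real.exp (-(1/2 : ℝ) * r ^ (2:ℝ)) from rfl]
  rw [integral_rpow_mul_exp_neg_mul_rpow (by norm_num) (by linarith) (by norm_num)]
  have h2 : ((1:ℝ)/2) ^ (-(p + 1 + 1) / 2) = 2 ^ (p/2) * 2 := by
    rw [one_div, Real.inv_rpow (by norm_num : (0:ℝ) ≤ 2),
      ← Real.rpow_neg (by norm_num : (0:ℝ) ≤ 2),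
      show -(-(p + 1 + 1) / 2) = p/2 + 1 by ring,
      Real.rpow_add_one (by norm_num : (2:ℝ) ≠ 0)]
  rw [h2, show (p + 1 + 1) / 2 = p/2 + 1 by ring]
  ring

lemma gauss_prod : (gaussianReal 0 1).prod (gaussianReal 0 1) =
    (volume : Measure (ℝ × ℝ)).withDensity
      (fun z => gaussianPDF 0 1 z.1 * gaussianPDF 0 1 z.2) := by
  have hm : Measurable (gaussianPDF 0 1) := by
    rw [gaussianPDF_def]; exact (measurable_gaussianPDFReal 0 1).ennreal_ofReal
  refine Measure.prod_eq (fun s t hs ht => ?_)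
  rw [withDensity_apply _ (hs.prod ht), Measure.volume_eq_prod, ← Measure.prod_restrict,
    lintegral_prod_mul hm.aemeasurable hm.aemeasurable,
    ← gaussianReal_apply 0 one_ne_zero s, ← gaussianReal_apply 0 one_ne_zero t]

lemma pdf_eq (x : ℝ) : gaussianPDFReal 0 1 x = (√(2*π))⁻¹ * Real.exp (-x^2/2) := by
  simp [gaussianPDFReal]

lemma pointwise {p r θ : ℝ} (hr : 0 < r) :
    r • (gaussianPDFReal 0 1 (r * Real.cos θ) * gaussianPDFReal 0 1 (r * Real.sin θ) *
        |(|r * Real.cos θ|) ^ p - (|r * Real.sin θ|) ^ p|)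
      = (r ^ (p+1) * Real.exp (-(1/2) * r ^ (2:ℝ))) * ((2*π)⁻¹ * Af p θ) := by
  have h1 : |r * Real.cos θ| = r * |Real.cos θ| := by rw [abs_mul, abs_of_pos hr]
  have h2 : |r * Real.sin θ| = r * |Real.sin θ| := by rw [abs_mul, abs_of_pos hr]
  have hexp : Real.exp (-(r * Real.cos θ)^2/2) * Real.exp (-(r * Real.sin θ)^2/2)
      = Real.exp (-(1/2) * r ^ (2:ℝ)) := by
    rw [← Real.exp_add, show ((2:ℝ)) = ((2:ℕ):ℝ) by norm_num, Real.rpow_natCast]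
    congr 1
    have hcs := Real.sin_sq_add_cos_sq θ
    nlinarith [hcs]
  have hk : (√(2*π))⁻¹ * (√(2*π))⁻¹ = (2*π)⁻¹ := by
    rw [← mul_inv, Real.mul_self_sqrt (by positivity)]
  simp only [Af]
  rw [h1, h2, Real.mul_rpow hr.le (abs_nonneg _), Real.mul_rpow hr.le (abs_nonneg _),
    ← mul_sub, abs_mul, abs_of_nonneg (Real.rpow_nonneg hr.le p), pdf_eq, pdf_eq,
    smul_eq_mul, Real.rpow_add_one hr.ne']
  linear_combination (r ^ p * r * |(|Real.cos θ|) ^ p - (|Real.sin θ|) ^ p| *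
      ((√(2*π))⁻¹ * (√(2*π))⁻¹)) * hexp +
    (r ^ p * r * |(|Real.cos θ|) ^ p - (|Real.sin θ|) ^ p| *
      Real.exp (-(1/2) * r ^ (2:ℝ))) * hk

end Stmt19

open Stmt19 in
theorem stmt_19 (p : ℝ) (hp1 : 1 ≤ p) (hp2 : p ≤ 2) :
    (2:ℝ) ^ (p/2) / 2 * Real.Gamma (p/2 + 1)
      ≤ ∫ z : ℝ × ℝ, |(|z.1|) ^ p - (|z.2|) ^ p|
          ∂((gaussianReal 0 1).prod (gaussianReal 0 1)) := by
  have hpi := Real.pi_pos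
  have hdmeas : Measurable (fun z : ℝ × ℝ =>
      Real.toNNReal (gaussianPDFReal 0 1 z.1 * gaussianPDFReal 0 1 z.2)) :=
    (((measurable_gaussianPDFReal 0 1).comp measurable_fst).mul
      ((measurable_gaussianPDFReal 0 1).comp measurable_snd)).real_toNNReal
  have gauss_prod' : (gaussianReal 0 1).prod (gaussianReal 0 1) =
      (volume : Measure (ℝ × ℝ)).withDensity
        (fun z => ((gaussianPDFReal 0 1 z.1 * gaussianPDFReal 0 1 z.2).toNNReal : ENNReal)) := by
    rw [gauss_prod]
    congr 1
    funext z
    simp only [gaussianPDF]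
    rw [← ENNReal.ofReal_mul (gaussianPDFReal_nonneg 0 1 z.1)]
    rfl
  have key : ∫ z : ℝ × ℝ, |(|z.1|) ^ p - (|z.2|) ^ p|
        ∂((gaussianReal 0 1).prod (gaussianReal 0 1))
      = (2 ^ (p/2) * Real.Gamma (p/2 + 1)) *
        ((2*π)⁻¹ * ∫ θ in Ioo (-π) π, Af p θ) := by
    rw [gauss_prod', integral_withDensity_eq_integral_smul hdmeas]
    calc ∫ z : ℝ × ℝ, Real.toNNReal (gaussianPDFReal 0 1 z.1 * gaussianPDFReal 0 1 z.2) •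
            |(|z.1|) ^ p - (|z.2|) ^ p|
        = ∫ z : ℝ × ℝ, (gaussianPDFReal 0 1 z.1 * gaussianPDFReal 0 1 z.2) *
            |(|z.1|) ^ p - (|z.2|) ^ p| := by
          congr 1
          funext z
          rw [NNReal.smul_def, Real.coe_toNNReal _
            (mul_nonneg (gaussianPDFReal_nonneg 0 1 z.1) (gaussianPDFReal_nonneg 0 1 z.2)),
            smul_eq_mul]
      _ = ∫ q in polarCoord.target, q.1 •
            ((gaussianPDFReal 0 1 (polarCoord.symm q).1 *
              gaussianPDFReal 0 1 (polarCoord.symm q).2) *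
            |(|(polarCoord.symm q).1|) ^ p - (|(polarCoord.symm q).2|) ^ p|) :=
          (integral_comp_polarCoord_symm _).symm
      _ = ∫ q in Ioi (0:ℝ) ×ˢ Ioo (-π) π,
            (fun r => r ^ (p+1) * Real.exp (-(1/2) * r ^ (2:ℝ))) q.1 *
            ((fun θ => (2*π)⁻¹ * Af p θ) q.2) := by
          rw [polarCoord_target]
          refine setIntegral_congr_fun (measurableSet_Ioi.prod measurableSet_Ioo)
            (fun q hq => ?_)
          simp only [polarCoord_symm_apply]
          exact pointwise hq.1
      _ = (∫ r in Ioi (0:ℝ), r ^ (p+1) * Real.exp (-(1/2) * r ^ (2:ℝ))) *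
            (∫ θ in Ioo (-π) π, (2*π)⁻¹ * Af p θ) := by
          rw [← setIntegral_prod_mul]
          rfl
      _ = (2 ^ (p/2) * Real.Gamma (p/2 + 1)) * ((2*π)⁻¹ * ∫ θ in Ioo (-π) π, Af p θ) := by
          rw [radial hp1, integral_const_mul]
  rw [key]
  have hI := angular hp1 hp2
  have hG : 0 < Real.Gamma (p/2 + 1) := Real.Gamma_pos_of_pos (by linarith)
  have h2p : 0 < (2:ℝ) ^ (p/2) := Real.rpow_pos_of_pos two_pos _
  have hhalf : (1:ℝ)/2 ≤ (2*π)⁻¹ * ∫ θ in Ioo (-π) π, Af p θ := by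
    have base : (2*π)⁻¹ * π = 1/2 := by field_simp
    rw [← base]
    exact mul_le_mul_of_nonneg_left hI (by positivity)
  calc (2:ℝ) ^ (p/2) / 2 * Real.Gamma (p/2 + 1)
      = (2 ^ (p/2) * Real.Gamma (p/2 + 1)) * (1/2) := by ring
    _ ≤ _ := mul_le_mul_of_nonneg_left hhalf (by positivity)
end
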